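/- arXiv:math/0703004 — 8 statements merged into one kernel-verified Lean document; each statement's English description precedes it below -/
import Mathlib

section
/- The map irc exchanges the statistics A_EN and A_NE: for any permutation π of [n], A_EN(irc(π)) = A_NE(π) and A_NE(irc(π)) = A_EN(π). Consequently A_EN and A_NE are equidistributed on S_n. -/
/-- The inverse-reverse-complement map: `irc π i = j ↔ π (rev j) = rev i`. -/
def irc {n : ℕ} (π : Equiv.Perm (Fin n)) : Equiv.Perm (Fin n) :=
  Fin.revPerm * π⁻¹ * Fin.revPerm

def AEE {n : ℕ} (π : Equiv.Perm (Fin n)) : ℕ :=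
  (Finset.univ.filter fun p : Fin n × Fin n =>
    p.2 < p.1 ∧ p.1 ≤ π p.1 ∧ π p.1 < π p.2).card

def ANN {n : ℕ} (π : Equiv.Perm (Fin n)) : ℕ :=
  (Finset.univ.filter fun p : Fin n × Fin n =>
    π p.2 < π p.1 ∧ π p.1 < p.1 ∧ p.1 < p.2).card

def AEN {n : ℕ} (π : Equiv.Perm (Fin n)) : ℕ :=
  (Finset.univ.filter fun p : Fin n × Fin n =>
    p.2 ≤ π p.2 ∧ π p.2 < π p.1 ∧ π p.1 < p.1).card

def ANE {n : ℕ} (π : Equiv.Perm (Fin n)) : ℕ :=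
  (Finset.univ.filter fun p : Fin n × Fin n =>
    π p.1 < p.1 ∧ p.1 < p.2 ∧ p.2 ≤ π p.2).card

def CEE {n : ℕ} (π : Equiv.Perm (Fin n)) : ℕ :=
  (Finset.univ.filter fun p : Fin n × Fin n =>
    p.2 < p.1 ∧ p.1 ≤ π p.2 ∧ π p.2 < π p.1).card

def CNN {n : ℕ} (π : Equiv.Perm (Fin n)) : ℕ :=
  (Finset.univ.filter fun p : Fin n × Fin n =>
    π p.1 < π p.2 ∧ π p.2 < p.1 ∧ p.1 < p.2).card

lemma irc_apply_rev_apply {n : ℕ} (π : Equiv.Perm (Fin n)) (x : Fin n) :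
    irc π (Fin.rev (π x)) = Fin.rev x := by
  simp [irc, Equiv.Perm.mul_apply]

lemma irc_involutive {n : ℕ} : Function.Involutive (irc (n := n)) := by
  intro π
  ext i
  simp [irc, mul_inv_rev]

/-- A pair `(x, y)` counted by `ANE π` corresponds to the pair `(rev (π x), rev (π y))`
counted by `AEN (irc π)`. -/
lemma ANE_eq_AEN_irc {n : ℕ} (π : Equiv.Perm (Fin n)) : ANE π = AEN (irc π) := by
  let e : Fin n ≃ Fin n := π.trans Fin.revPerm
  refine Finset.card_equiv (e.prodCongr e) fun p => ?_
  simp only [Finset.mem_filter, Finset.mem_univ, true_and, Equiv.prodCongr_apply, Prod.map_fst,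
    Prod.map_snd, e, Equiv.trans_apply, Fin.revPerm_apply, irc_apply_rev_apply, Fin.rev_le_rev,
    Fin.rev_lt_rev]
  tauto

theorem irc_exchanges_AEN_ANE (n : ℕ) (π : Equiv.Perm (Fin n)) :
    AEN (irc π) = ANE π ∧ ANE (irc π) = AEN π := by
  refine ⟨(ANE_eq_AEN_irc π).symm, ?_⟩
  simpa only [irc_involutive π] using ANE_eq_AEN_irc (irc π)
end

section
/- The map irc preserves the alignment statistic A_EE: for any permutation π of [n], A_EE(irc(π)) = A_EE(π). -/
theorem irc_preserves_AEE (n : ℕ) (π : Equiv.Perm (Fin n)) :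
    AEE (irc π) = AEE π := by
  unfold AEE
  apply Finset.card_bij' (fun p _ => (π⁻¹ p.1.rev, π⁻¹ p.2.rev))
    (fun p _ => ((π p.1).rev, (π p.2).rev)) <;>
    intro p hp <;> simp only [Finset.mem_filter, Finset.mem_univ, true_and] at hp ⊢ <;>
    simp only [irc, Equiv.Perm.mul_apply, Fin.revPerm_apply, Equiv.Perm.coe_inv, Equiv.apply_symm_apply,
      Equiv.symm_apply_apply, Fin.rev_rev, Fin.rev_lt_rev, Fin.rev_le_rev] at hp ⊢
  · exact ⟨hp.2.2, by simpa using Fin.rev_le_rev.mpr hp.2.1, hp.1⟩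
  · exact ⟨hp.2.2, hp.2.1, hp.1⟩
end

section
/- The map irc preserves the alignment statistic A_NN: for any permutation π of [n], A_NN(irc(π)) = A_NN(π). -/
theorem irc_preserves_ANN (n : ℕ) (π : Equiv.Perm (Fin n)) :
    ANN (irc π) = ANN π := by
  unfold ANN irc
  apply Finset.card_equiv
    (Equiv.prodCongr ((Fin.revPerm : Equiv.Perm (Fin n)).trans π⁻¹)
      ((Fin.revPerm : Equiv.Perm (Fin n)).trans π⁻¹))
  intro p
  simp only [Finset.mem_filter, Finset.mem_univ, true_and, Equiv.prodCongr_apply,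
    Prod.map_fst, Prod.map_snd, Equiv.trans_apply, Equiv.Perm.mul_apply,
    Fin.revPerm_apply, (show ∀ x, π (π⁻¹ x) = x from fun x => π.apply_symm_apply x)]
  simp only [Fin.lt_iff_val_lt_val, Fin.val_rev]
  have := (π⁻¹ p.1.rev).isLt
  have := (π⁻¹ p.2.rev).isLt
  have := p.1.isLt
  have := p.2.isLt
  omega
end

section
/- The map irc preserves the crossing statistic C_EE: for any permutation π of [n], C_EE(irc(π)) = C_EE(π). -/
/-!
`irc π` is `π⁻¹` conjugated by the reversal `i ↦ n + 1 - i`. Sending a pair `(j, i)` to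
`(rev π(i), rev π(j))` turns the three inequalities `j < i ≤ π(j) < π(i)` of an `EE` crossing of
`π` into those of `irc π`, in permuted order, so it is a bijection between the crossings of `π` and
those of `irc π`.
-/

open Finset

namespace Equiv.Perm

variable {n : ℕ} (π : Perm (Fin n))

def IsCrossingEE (j i : Fin n) : Prop :=
  j < i ∧ i ≤ π j ∧ π j < π i

instance : DecidableRel π.IsCrossingEE :=
  fun _ _ => inferInstanceAs (Decidable (_ ∧ _ ∧ _))

theorem CEE_eq_card_isCrossingEE :
    CEE π = #{p : Fin n × Fin n | π.IsCrossingEE p.2 p.1} :=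
  rfl

theorem irc_apply_rev_apply (a : Fin n) : irc π (π a).rev = a.rev := by
  simp [irc]

theorem isCrossingEE_iff_irc (j i : Fin n) :
    π.IsCrossingEE j i ↔ (irc π).IsCrossingEE (π i).rev (π j).rev := by
  simp only [IsCrossingEE, irc_apply_rev_apply, Fin.rev_lt_rev, Fin.rev_le_rev]
  tauto

end Equiv.Perm

open Equiv.Perm in
theorem irc_preserves_CEE (n : ℕ) (π : Equiv.Perm (Fin n)) :
    CEE (irc π) = CEE π := by
  let e : Fin n ≃ Fin n := π.trans Fin.revPerm
  rw [CEE_eq_card_isCrossingEE, CEE_eq_card_isCrossingEE]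
  refine (card_equiv ((e.prodCongr e).trans (Equiv.prodComm _ _)) fun p => ?_).symm
  simpa [e] using isCrossingEE_iff_irc π p.2 p.1
end

section
/- The map irc preserves the crossing statistic C_NN: for any permutation π of [n], C_NN(irc(π)) = C_NN(π). -/
theorem Equiv.Perm.apply_inv_self {α : Type*} (f : Equiv.Perm α) (x : α) : f (f⁻¹ x) = x :=
  Equiv.apply_symm_apply f x

theorem Equiv.Perm.inv_apply_self {α : Type*} (f : Equiv.Perm α) (x : α) : f⁻¹ (f x) = x :=
  Equiv.symm_apply_apply f x

theorem irc_preserves_CNN (n : ℕ) (π : Equiv.Perm (Fin n)) :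
    CNN (irc π) = CNN π := by
  have hirc : ∀ i : Fin n, irc π i = Fin.rev (π⁻¹ (Fin.rev i)) := fun i => rfl
  unfold CNN
  apply Finset.card_bij' (fun p _ => (π⁻¹ (Fin.rev p.2), π⁻¹ (Fin.rev p.1)))
    (fun p _ => (Fin.rev (π p.2), Fin.rev (π p.1)))
  · intro p hp
    simp only [Finset.mem_filter, Finset.mem_univ, true_and, hirc,
      Equiv.Perm.apply_inv_self, Fin.rev_rev, Fin.rev_lt_rev, Fin.rev_lt_iff,
      Fin.lt_rev_iff] at hp ⊢
    tauto
  · intro p hp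
    simp only [Finset.mem_filter, Finset.mem_univ, true_and, hirc,
      Fin.rev_rev, Equiv.Perm.inv_apply_self, Fin.rev_lt_rev, Fin.rev_lt_iff,
      Fin.lt_rev_iff] at hp ⊢
    tauto
  · intro p hp
    simp [Equiv.Perm.apply_inv_self]
  · intro p hp
    simp [Equiv.Perm.inv_apply_self]
end

section
/- A permutation π of [n] avoids the pattern 3-2-1 if and only if both its subsequence of weak excedance values and its subsequence of non-weak-excedance values are increasing; equivalently, iff π is a union of at most two increasing subsequences partitioned by weak excedances. -/
def Avoids321 {n : ℕ} (π : Equiv.Perm (Fin n)) : Prop :=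
  ¬ ∃ i j k : Fin n, i < j ∧ j < k ∧ π k < π j ∧ π j < π i

/-!
If two weak excedances `i < j` formed an inversion `π j < π i`, then, as `j ≤ π j`, the `π j`
positions carrying a value below `π j` cannot all lie among the positions before `j` other than
`i`; so some `k > j` has `π k < π j`, a 3-2-1 pattern. For non-weak excedances this is the same
count in the reversed order. Conversely, an inversion can only join a weak excedance to a
non-weak one, and the three pairs of a 3-2-1 pattern are all inversions, which is impossible
with two classes.
-/

open Finset

namespace Equiv.Perm

variable {α : Type*} [LinearOrder α]

theorem exists_lt_apply_lt_of_le_apply [Fintype α] (π : Perm α) {i j : α} (hij : i < j)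
    (hj : j ≤ π j) (hji : π j < π i) : ∃ k, j < k ∧ π k < π j := by
  by_contra! hafter
  have hsub : ({k | π k < π j} : Finset α) ⊆ ({k | k < j} : Finset α).erase i := by
    intro k hk
    simp only [mem_filter, mem_univ, true_and, mem_erase] at hk ⊢
    refine ⟨by rintro rfl; exact hk.not_gt hji, ?_⟩
    by_contra! hjk
    rcases hjk.eq_or_lt with rfl | hjk
    · exact hk.false
    · exact (hafter k hjk).not_gt hk
  have hi : i ∈ ({k | k < j} : Finset α) := by simpa using hij
  exact (calc #{v | v < π j}
      _ = #{k | π k < π j} := (card_equiv π (by simp)).symm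
      _ ≤ #{k | k < j} - 1 := card_erase_of_mem hi ▸ card_le_card hsub
      _ < #{k | k < j} := Nat.sub_lt (card_pos.2 ⟨i, hi⟩) one_pos
      _ ≤ #{v | v < π j} :=
        card_le_card (monotone_filter_right _ fun _ _ hk => hk.trans_le hj)).false

theorem exists_lt_lt_apply_of_apply_le [Fintype α] (π : Perm α) {i j : α} (hij : i < j)
    (hi : π i ≤ i) (hji : π j < π i) : ∃ h, h < i ∧ π i < π h :=
  exists_lt_apply_lt_of_le_apply (α := αᵒᵈ) π hij hi hji

end Equiv.Perm

theorem avoids321_iff_wex_nonwex_increasing (n : ℕ) (π : Equiv.Perm (Fin n)) :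
    Avoids321 π ↔
      ((∀ i j : Fin n, i < j → i ≤ π i → j ≤ π j → π i < π j) ∧
       (∀ i j : Fin n, i < j → π i < i → π j < j → π i < π j)) := by
  constructor
  · intro hav
    refine ⟨fun i j hij hi hj => ?_, fun i j hij hi hj => ?_⟩ <;>
      refine lt_of_le_of_ne (not_lt.1 fun hji => hav ?_) (π.injective.ne hij.ne)
    · obtain ⟨k, hjk, hkj⟩ := π.exists_lt_apply_lt_of_le_apply hij hj hji
      exact ⟨i, j, k, hij, hjk, hkj, hji⟩
    · obtain ⟨h, hhi, hih⟩ := π.exists_lt_lt_apply_of_apply_le hij hi.le hji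
      exact ⟨h, i, j, hhi, hij, hji, hih⟩
  · rintro ⟨hwex, hnonwex⟩ ⟨i, j, k, hij, hjk, hkj, hji⟩
    have hinversion : ∀ {a b}, a < b → π b < π a → (a ≤ π a ↔ ¬ b ≤ π b) := fun hab hba =>
      ⟨fun ha hb => (hwex _ _ hab ha hb).not_gt hba,
        fun hb => not_lt.1 fun ha => (hnonwex _ _ hab ha (not_le.1 hb)).not_gt hba⟩
    have := hinversion hij hji
    have := hinversion hjk hkj
    have := hinversion (hij.trans hjk) (hkj.trans hji)
    tauto
end

section
/- The number of permutations of [n] avoiding the pattern 3-2-1 equals the n-th Catalan number C_n = C(2n,n)/(n+1). -/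
instance {n : ℕ} (π : Equiv.Perm (Fin n)) : Decidable (Avoids321 π) := by
  unfold Avoids321; infer_instance

open Finset



/-- Monotone functions `Fin n → Fin n` weakly above the diagonal. -/
def Mset (n : ℕ) : Finset (Fin n → Fin n) :=
  univ.filter fun f => (∀ i j : Fin n, i ≤ j → f i ≤ f j) ∧ ∀ i : Fin n, (i : ℕ) ≤ (f i : ℕ)

lemma mem_Mset {n : ℕ} {f : Fin n → Fin n} :
    f ∈ Mset n ↔ (∀ i j : Fin n, i ≤ j → f i ≤ f j) ∧ ∀ i : Fin n, (i : ℕ) ≤ (f i : ℕ) := by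
  simp [Mset]

/-- the least (nat) index at which `f` has a fixed point -/
noncomputable def keyF {m : ℕ} (f : Fin (m + 1) → Fin (m + 1)) : ℕ :=
  sInf {i : ℕ | ∃ h : i < m + 1, f ⟨i, h⟩ = ⟨i, h⟩}

lemma keyF_spec {m : ℕ} {f : Fin (m + 1) → Fin (m + 1)} (hf : f ∈ Mset (m + 1)) :
    keyF f ≤ m ∧ (∃ h : keyF f < m + 1, f ⟨keyF f, h⟩ = ⟨keyF f, h⟩) ∧
      (∀ i (h : i < m + 1), i < keyF f → i < (f ⟨i, h⟩ : ℕ)) := by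
  obtain ⟨hmono, hd⟩ := mem_Mset.1 hf
  have hm : m ∈ {i : ℕ | ∃ h : i < m + 1, f ⟨i, h⟩ = ⟨i, h⟩} := by
    refine ⟨by omega, ?_⟩
    have h1 := hd ⟨m, by omega⟩
    have h2 := (f ⟨m, by omega⟩).isLt
    simp only [Fin.val_mk] at h1
    exact Fin.ext (by simp only [Fin.val_mk]; omega)
  have hne : {i : ℕ | ∃ h : i < m + 1, f ⟨i, h⟩ = ⟨i, h⟩}.Nonempty := ⟨m, hm⟩
  refine ⟨Nat.sInf_le hm, Nat.sInf_mem hne, ?_⟩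
  intro i h hi
  have : i ∉ {i : ℕ | ∃ h : i < m + 1, f ⟨i, h⟩ = ⟨i, h⟩} := Nat.notMem_of_lt_sInf hi
  have hne' : f ⟨i, h⟩ ≠ ⟨i, h⟩ := by
    intro hc; exact this ⟨h, hc⟩
  have h1 := hd ⟨i, h⟩
  have hne2 : (f ⟨i, h⟩ : ℕ) ≠ i := fun hc => hne' (Fin.ext (by simp [hc]))
  simp only [Fin.val_mk] at h1
  omega

variable {n k : ℕ}

/-- splitting maps -/
def splitL (n k : ℕ) (hk : k ≤ n) (f : Fin (n + 1) → Fin (n + 1)) : Fin k → Fin k :=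
  fun a => ⟨min ((f ⟨a, by omega⟩ : ℕ) - 1) (k - 1), by have := a.isLt; omega⟩

def splitR (n k : ℕ) (hk : k ≤ n) (f : Fin (n + 1) → Fin (n + 1)) : Fin (n - k) → Fin (n - k) :=
  fun b => ⟨min ((f ⟨k + 1 + b, by have := b.isLt; omega⟩ : ℕ) - (k + 1)) (n - k - 1), by
    have := b.isLt; omega⟩

def unsplit (n k : ℕ) (hk : k ≤ n) (g : Fin k → Fin k) (h : Fin (n - k) → Fin (n - k)) :
    Fin (n + 1) → Fin (n + 1) := fun i =>
  if hik : (i : ℕ) < k then ⟨(g ⟨i, hik⟩ : ℕ) + 1, by have := (g ⟨i, hik⟩).isLt; omega⟩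
  else if hik2 : (i : ℕ) = k then i
  else ⟨(h ⟨(i : ℕ) - (k + 1), by have := i.isLt; omega⟩ : ℕ) + (k + 1), by
    have := (h ⟨(i : ℕ) - (k + 1), by have := i.isLt; omega⟩).isLt; omega⟩

lemma unsplit_val_lt (hk : k ≤ n) (g h) (i : Fin (n + 1)) (hik : (i : ℕ) < k) :
    (unsplit n k hk g h i : ℕ) = (g ⟨i, hik⟩ : ℕ) + 1 := by
  simp [unsplit, dif_pos hik]

lemma unsplit_val_eq (hk : k ≤ n) (g h) (i : Fin (n + 1)) (hik : (i : ℕ) = k) :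
    (unsplit n k hk g h i : ℕ) = k := by
  simp [unsplit, hik]

lemma unsplit_val_gt (hk : k ≤ n) (g h) (i : Fin (n + 1)) (hik : k < (i : ℕ)) :
    (unsplit n k hk g h i : ℕ) =
      (h ⟨(i : ℕ) - (k + 1), by have := i.isLt; omega⟩ : ℕ) + (k + 1) := by
  have h1 : ¬ ((i : ℕ) < k) := by omega
  have h2 : ¬ ((i : ℕ) = k) := by omega
  simp [unsplit, dif_neg h1, h2]

lemma fiber_facts (hk : k ≤ n) {f : Fin (n + 1) → Fin (n + 1)}
    (hf : f ∈ (Mset (n + 1)).filter fun f => keyF f = k) :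
    (∀ i j : Fin (n + 1), (i : ℕ) ≤ (j : ℕ) → (f i : ℕ) ≤ (f j : ℕ)) ∧
    (∀ i : Fin (n + 1), (i : ℕ) ≤ (f i : ℕ)) ∧
    (∀ i : Fin (n + 1), (i : ℕ) < k → (i : ℕ) < (f i : ℕ) ∧ (f i : ℕ) ≤ k) ∧
    (∀ i : Fin (n + 1), (i : ℕ) = k → (f i : ℕ) = k) := by
  obtain ⟨hf1, hkey⟩ := mem_filter.1 hf
  obtain ⟨hmono, hd⟩ := mem_Mset.1 hf1
  obtain ⟨hkn, ⟨hlt, hfix⟩, hstrict⟩ := keyF_spec hf1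
  have hmono' : ∀ i j : Fin (n + 1), (i : ℕ) ≤ (j : ℕ) → (f i : ℕ) ≤ (f j : ℕ) := by
    intro i j hij
    exact_mod_cast Fin.le_def.1 (hmono i j (Fin.le_def.2 hij))
  have hfk : ∀ i : Fin (n + 1), (i : ℕ) = k → (f i : ℕ) = k := by
    intro i hik
    have h1 : i = ⟨keyF f, hlt⟩ := Fin.ext (by simp [hik, hkey])
    rw [h1, hfix]
    simp [hkey]
  refine ⟨hmono', hd, ?_, hfk⟩
  intro i hik
  have h1 := hstrict i i.isLt (by omega)
  have h2 : (f i : ℕ) ≤ k := by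
    have h3 := hmono' i ⟨keyF f, hlt⟩ (by simp [hkey]; omega)
    have h4 := hfk ⟨keyF f, hlt⟩ (by simp [hkey])
    omega
  have h5 : (⟨(i : ℕ), i.isLt⟩ : Fin (n + 1)) = i := Fin.ext rfl
  rw [h5] at h1
  exact ⟨h1, h2⟩

lemma splitL_val (hk : k ≤ n) {f : Fin (n + 1) → Fin (n + 1)}
    (hf : f ∈ (Mset (n + 1)).filter fun f => keyF f = k) (a : Fin k) :
    (splitL n k hk f a : ℕ) = (f ⟨a, by omega⟩ : ℕ) - 1 := by
  obtain ⟨hmono, hd, hlow, hfk⟩ := fiber_facts hk hf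
  obtain ⟨h1, h2⟩ := hlow ⟨a, by omega⟩ (by simpa using a.isLt)
  simp only [splitL, Fin.val_mk] at h1 h2 ⊢
  omega

lemma splitR_val (hk : k ≤ n) {f : Fin (n + 1) → Fin (n + 1)}
    (hf : f ∈ (Mset (n + 1)).filter fun f => keyF f = k) (b : Fin (n - k)) :
    (splitR n k hk f b : ℕ) = (f ⟨k + 1 + b, by have := b.isLt; omega⟩ : ℕ) - (k + 1) := by
  obtain ⟨hmono, hd, hlow, hfk⟩ := fiber_facts hk hf
  have hb := b.isLt
  have h1 := hd ⟨k + 1 + b, by omega⟩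
  have h2 := (f ⟨k + 1 + b, by omega⟩).isLt
  simp only [splitR, Fin.val_mk] at h1 ⊢
  omega

lemma unsplit_mem (hk : k ≤ n) {g : Fin k → Fin k} {h : Fin (n - k) → Fin (n - k)}
    (hg : g ∈ Mset k) (hh : h ∈ Mset (n - k)) :
    unsplit n k hk g h ∈ (Mset (n + 1)).filter fun f => keyF f = k := by
  obtain ⟨hgmono, hgd⟩ := mem_Mset.1 hg
  obtain ⟨hhmono, hhd⟩ := mem_Mset.1 hh
  have hgmono' : ∀ i j : Fin k, (i : ℕ) ≤ (j : ℕ) → (g i : ℕ) ≤ (g j : ℕ) := fun i j hij =>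
    Fin.le_def.1 (hgmono i j (Fin.le_def.2 hij))
  have hhmono' : ∀ i j : Fin (n - k), (i : ℕ) ≤ (j : ℕ) → (h i : ℕ) ≤ (h j : ℕ) := fun i j hij =>
    Fin.le_def.1 (hhmono i j (Fin.le_def.2 hij))
  set F := unsplit n k hk g h with hF
  have hval : ∀ i : Fin (n + 1),
      (∀ hik : (i : ℕ) < k, (F i : ℕ) = (g ⟨i, hik⟩ : ℕ) + 1) ∧
      ((i : ℕ) = k → (F i : ℕ) = k) ∧
      (∀ _hik : k < (i : ℕ), (F i : ℕ) = (h ⟨(i : ℕ) - (k + 1), by have := i.isLt; omega⟩ : ℕ) + (k + 1)) := by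
    intro i
    refine ⟨fun hik => unsplit_val_lt hk g h i hik, fun hik => unsplit_val_eq hk g h i hik,
      fun hik => unsplit_val_gt hk g h i hik⟩
  rw [mem_filter]
  constructor
  · rw [mem_Mset]
    constructor
    · intro i j hij
      rw [Fin.le_def] at hij ⊢
      rcases lt_trichotomy (i : ℕ) k with h1 | h1 | h1 <;>
        rcases lt_trichotomy (j : ℕ) k with h2 | h2 | h2 <;>
        try omega
      · rw [(hval i).1 h1, (hval j).1 h2]
        have := hgmono' ⟨i, h1⟩ ⟨j, h2⟩ (by simpa using hij)
        omega
      · rw [(hval i).1 h1, (hval j).2.1 h2]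
        have := (g ⟨i, h1⟩).isLt
        omega
      · rw [(hval i).1 h1, (hval j).2.2 h2]
        have := (g ⟨i, h1⟩).isLt
        omega
      · rw [(hval i).2.1 h1, (hval j).2.1 h2]; try omega
      · rw [(hval i).2.1 h1, (hval j).2.2 h2]; try omega
      · rw [(hval i).2.2 h1, (hval j).2.2 h2]
        have := hhmono' ⟨(i : ℕ) - (k + 1), by have := i.isLt; omega⟩
          ⟨(j : ℕ) - (k + 1), by have := j.isLt; omega⟩ (by simp; omega)
        omega
    · intro i
      rcases lt_trichotomy (i : ℕ) k with h1 | h1 | h1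
      · rw [(hval i).1 h1]
        have := hgd ⟨i, h1⟩
        simp only [Fin.val_mk] at this
        omega
      · rw [(hval i).2.1 h1]; omega
      · rw [(hval i).2.2 h1]
        have := hhd ⟨(i : ℕ) - (k + 1), by have := i.isLt; omega⟩
        simp only [Fin.val_mk] at this
        omega
  · -- keyF F = k
    have hmem : k ∈ {i : ℕ | ∃ hlt : i < n + 1, F ⟨i, hlt⟩ = ⟨i, hlt⟩} := by
      refine ⟨by omega, Fin.ext ?_⟩
      have := (hval ⟨k, by omega⟩).2.1 (by simp)
      simpa using this
    refine le_antisymm (Nat.sInf_le hmem) ?_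
    apply le_csInf ⟨k, hmem⟩
    intro b hb
    obtain ⟨hblt, hbfix⟩ := hb
    by_contra hbk
    push_neg at hbk
    have h1 := (hval ⟨b, hblt⟩).1 (by simpa using hbk)
    have h2 : (F ⟨b, hblt⟩ : ℕ) = b := by rw [hbfix]
    have := hgd ⟨b, by omega⟩
    simp only [Fin.val_mk] at h1 this
    omega

lemma splitL_mem (hk : k ≤ n) {f : Fin (n + 1) → Fin (n + 1)}
    (hf : f ∈ (Mset (n + 1)).filter fun f => keyF f = k) : splitL n k hk f ∈ Mset k := by
  obtain ⟨hmono, hd, hlow, hfk⟩ := fiber_facts hk hf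
  rw [mem_Mset]
  constructor
  · intro a a' haa'
    rw [Fin.le_def, splitL_val hk hf a, splitL_val hk hf a']
    have h1 := hmono ⟨a, by omega⟩ ⟨a', by omega⟩ (by simpa using Fin.le_def.1 haa')
    have h2 := (hlow ⟨a, by omega⟩ (by simpa using a.isLt)).1
    simp only [Fin.val_mk] at h1 h2
    omega
  · intro a
    rw [splitL_val hk hf a]
    have h2 := (hlow ⟨a, by omega⟩ (by simpa using a.isLt)).1
    simp only [Fin.val_mk] at h2
    omega

lemma splitR_mem (hk : k ≤ n) {f : Fin (n + 1) → Fin (n + 1)}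
    (hf : f ∈ (Mset (n + 1)).filter fun f => keyF f = k) : splitR n k hk f ∈ Mset (n - k) := by
  obtain ⟨hmono, hd, hlow, hfk⟩ := fiber_facts hk hf
  rw [mem_Mset]
  constructor
  · intro b b' hbb'
    have hb := b.isLt; have hb' := b'.isLt
    rw [Fin.le_def, splitR_val hk hf b, splitR_val hk hf b']
    have h1 := hmono ⟨k + 1 + b, by omega⟩ ⟨k + 1 + b', by omega⟩
      (by simp only [Fin.val_mk]; have := Fin.le_def.1 hbb'; omega)
    have h2 := hd ⟨k + 1 + b, by omega⟩
    simp only [Fin.val_mk] at h1 h2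
    omega
  · intro b
    have hb := b.isLt
    rw [splitR_val hk hf b]
    have h2 := hd ⟨k + 1 + b, by omega⟩
    simp only [Fin.val_mk] at h2
    omega

lemma unsplit_split (hk : k ≤ n) {f : Fin (n + 1) → Fin (n + 1)}
    (hf : f ∈ (Mset (n + 1)).filter fun f => keyF f = k) :
    unsplit n k hk (splitL n k hk f) (splitR n k hk f) = f := by
  obtain ⟨hmono, hd, hlow, hfk⟩ := fiber_facts hk hf
  funext i
  apply Fin.ext
  rcases lt_trichotomy (i : ℕ) k with h1 | h1 | h1
  · rw [unsplit_val_lt hk _ _ i h1]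
    have h2 := splitL_val hk hf ⟨i, h1⟩
    have h3 : f ⟨((⟨(i : ℕ), h1⟩ : Fin k) : ℕ), by omega⟩ = f i := by
      apply congrArg f (Fin.ext (by simp))
    rw [h3] at h2
    rw [h2]
    have := (hlow i h1).1
    omega
  · rw [unsplit_val_eq hk _ _ i h1, hfk i h1]
  · rw [unsplit_val_gt hk _ _ i h1]
    have h2 := splitR_val hk hf ⟨(i : ℕ) - (k + 1), by have := i.isLt; omega⟩
    have h3 : f ⟨k + 1 + ((⟨(i : ℕ) - (k + 1), by have := i.isLt; omega⟩ : Fin (n - k)) : ℕ),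
        by have := i.isLt; simp only [Fin.val_mk]; omega⟩ = f i := by
      apply congrArg f (Fin.ext (by simp only [Fin.val_mk]; omega))
    rw [h3] at h2
    rw [h2]
    have := hd i
    omega

lemma split_unsplit (hk : k ≤ n) {g : Fin k → Fin k} {h : Fin (n - k) → Fin (n - k)}
    (hg : g ∈ Mset k) (hh : h ∈ Mset (n - k)) :
    splitL n k hk (unsplit n k hk g h) = g ∧ splitR n k hk (unsplit n k hk g h) = h := by
  have hmem := unsplit_mem hk hg hh
  constructor
  · funext a
    apply Fin.ext
    rw [splitL_val hk hmem a]
    have h1 := unsplit_val_lt hk g h ⟨(a : ℕ), by omega⟩ (by simpa using a.isLt)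
    have h2 : g ⟨((⟨(a : ℕ), by omega⟩ : Fin (n + 1)) : ℕ), by simpa using a.isLt⟩ = g a := by
      apply congrArg g (Fin.ext (by simp))
    rw [h2] at h1
    rw [h1]
    omega
  · funext b
    apply Fin.ext
    have hb := b.isLt
    rw [splitR_val hk hmem b]
    have h1 := unsplit_val_gt hk g h ⟨k + 1 + (b : ℕ), by omega⟩ (by simp; omega)
    have h2 : h ⟨((⟨k + 1 + (b : ℕ), by omega⟩ : Fin (n + 1)) : ℕ) - (k + 1),
        by simp only [Fin.val_mk]; omega⟩ = h b := by
      apply congrArg h (Fin.ext (by simp only [Fin.val_mk]; omega))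
    rw [h2] at h1
    rw [h1]
    omega

lemma fiber_card (hk : k ≤ n) :
    ((Mset (n + 1)).filter fun f => keyF f = k).card = (Mset k).card * (Mset (n - k)).card := by
  rw [← card_product]
  exact card_bij' (fun f _ => (splitL n k hk f, splitR n k hk f))
    (fun p _ => unsplit n k hk p.1 p.2)
    (fun f hf => mem_product.2 ⟨splitL_mem hk hf, splitR_mem hk hf⟩)
    (fun p hp => unsplit_mem hk (mem_product.1 hp).1 (mem_product.1 hp).2)
    (fun f hf => unsplit_split hk hf)
    (fun p hp => by
      obtain ⟨h1, h2⟩ := split_unsplit hk (mem_product.1 hp).1 (mem_product.1 hp).2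
      exact Prod.ext h1 h2)

lemma card_Mset : ∀ n : ℕ, (Mset n).card = catalan n := by
  intro n
  induction n using Nat.strong_induction_on with
  | _ n IH =>
    match n with
    | 0 =>
      rw [catalan_zero]
      rw [show (Mset 0) = univ from by
        apply filter_true_of_mem
        intro f _
        exact ⟨fun i => i.elim0, fun i => i.elim0⟩]
      simp
    | Nat.succ n =>
      have hmap : ∀ f ∈ Mset (n + 1), keyF f ∈ range (n + 1) := fun f hf =>
        mem_range.2 (by have := (keyF_spec hf).1; omega)
      rw [card_eq_sum_card_fiberwise hmap]
      rw [catalan_succ, ← Finset.sum_range (fun i => catalan i * catalan (n - i))]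
      apply Finset.sum_congr rfl
      intro k hk
      have hkn : k ≤ n := by have := mem_range.1 hk; omega
      rw [fiber_card hkn, IH k (by omega), IH (n - k) (by omega)]

variable {n : ℕ}

/-- `i` is a left-to-right maximum position of `f`. -/
def IsJump (f : Fin n → Fin n) (i : Fin n) : Prop := ∀ j < i, f j < f i

instance (f : Fin n → Fin n) (i : Fin n) : Decidable (IsJump f i) := by
  unfold IsJump; infer_instance

/-- non-jump positions -/
def NJ (f : Fin n → Fin n) : Finset (Fin n) := univ.filter fun i => ¬ IsJump f i

/-- running maximum -/
def rmaxF (p : Fin n → Fin n) (i : Fin n) : Fin n :=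
  (Iic i).sup' ⟨i, mem_Iic.2 le_rfl⟩ p

lemma le_rmaxF (p : Fin n → Fin n) {j i : Fin n} (h : j ≤ i) : p j ≤ rmaxF p i :=
  le_sup' p (mem_Iic.2 h)

lemma rmaxF_le (p : Fin n → Fin n) {i b : Fin n} (h : ∀ j ≤ i, p j ≤ b) : rmaxF p i ≤ b :=
  sup'_le _ _ fun j hj => h j (mem_Iic.1 hj)

lemma rmaxF_attained (p : Fin n → Fin n) (i : Fin n) : ∃ j ≤ i, p j = rmaxF p i := by
  obtain ⟨j, hj, hje⟩ := exists_mem_eq_sup' (⟨i, mem_Iic.2 le_rfl⟩ : (Iic i).Nonempty) p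
  exact ⟨j, mem_Iic.1 hj, hje.symm⟩

lemma rmaxF_mono (p : Fin n → Fin n) {i i' : Fin n} (h : i ≤ i') : rmaxF p i ≤ rmaxF p i' :=
  rmaxF_le p fun j hj => le_rmaxF p (le_trans hj h)

lemma rmaxF_diag (p : Fin n → Fin n) (hinj : Function.Injective p) (i : Fin n) :
    (i : ℕ) ≤ (rmaxF p i : ℕ) := by
  have hsub : (Iic i).image p ⊆ Iic (rmaxF p i) := by
    intro x hx
    obtain ⟨j, hj, rfl⟩ := mem_image.1 hx
    exact mem_Iic.2 (le_rmaxF p (mem_Iic.1 hj))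
  have h1 := card_le_card hsub
  rw [card_image_of_injective _ hinj, Fin.card_Iic, Fin.card_Iic] at h1
  omega

/-- the running max is attained at a jump position. -/
lemma rmaxF_attained_at_jump (p : Fin n → Fin n) (i : Fin n) :
    ∃ j ≤ i, IsJump p j ∧ p j = rmaxF p i := by
  set S : Finset (Fin n) := (Iic i).filter (fun j => p j = rmaxF p i) with hS
  have hmemS : ∀ j : Fin n, j ∈ S ↔ j ≤ i ∧ p j = rmaxF p i := by
    intro j; rw [hS, mem_filter, mem_Iic]
  have hne : S.Nonempty := by
    obtain ⟨j, hj, hje⟩ := rmaxF_attained p i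
    exact ⟨j, (hmemS j).2 ⟨hj, hje⟩⟩
  set j := S.min' hne with hjdef
  have hjmem := (hmemS j).1 (S.min'_mem hne)
  refine ⟨j, hjmem.1, ?_, hjmem.2⟩
  intro l hl
  have hl1 : p l ≤ rmaxF p i := le_rmaxF p (le_trans (le_of_lt hl) hjmem.1)
  have hl2 : p l ≠ rmaxF p i := by
    intro hc
    have : j ≤ l := S.min'_le l ((hmemS l).2 ⟨le_trans (le_of_lt hl) hjmem.1, hc⟩)
    exact absurd hl (not_lt.2 this)
  rw [hjmem.2]
  exact lt_of_le_of_ne hl1 hl2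

/-- every value of a monotone `f` is attained at a jump. -/
lemma exists_jump_of_mono {f : Fin n → Fin n} (hmono : Monotone f) (i : Fin n) :
    ∃ j ≤ i, IsJump f j ∧ f j = f i := by
  set S : Finset (Fin n) := (Iic i).filter (fun j => f j = f i) with hS
  have hmemS : ∀ j : Fin n, j ∈ S ↔ j ≤ i ∧ f j = f i := by
    intro j; rw [hS, mem_filter, mem_Iic]
  have hne : S.Nonempty := ⟨i, (hmemS i).2 ⟨le_rfl, rfl⟩⟩
  set j := S.min' hne with hjdef
  have hjmem := (hmemS j).1 (S.min'_mem hne)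
  refine ⟨j, hjmem.1, ?_, hjmem.2⟩
  intro l hl
  have hl1 : f l ≤ f j := hmono (le_of_lt hl)
  have hl2 : f l ≠ f i := by
    intro hc
    have : j ≤ l := S.min'_le l ((hmemS l).2 ⟨le_trans (le_of_lt hl) hjmem.1, hc⟩)
    exact absurd hl (not_lt.2 this)
  rw [hjmem.2] at hl1 ⊢
  exact lt_of_le_of_ne hl1 hl2

lemma jump_injOn {f : Fin n → Fin n} {i j : Fin n} (hi : IsJump f i) (hj : IsJump f j)
    (hij : f i = f j) : i = j := by
  rcases lt_trichotomy i j with h | h | h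
  · exact absurd (hj i h) (by rw [hij]; exact lt_irrefl _)
  · exact h
  · exact absurd (hi j h) (by rw [hij]; exact lt_irrefl _)

/-- jump values of `f` -/
def JVj (f : Fin n → Fin n) : Finset (Fin n) := (univ.filter (IsJump f)).image f

lemma card_NJ (f : Fin n → Fin n) : (NJ f).card = ((JVj f)ᶜ).card := by
  have h1 : (JVj f).card = (univ.filter (IsJump f)).card :=
    card_image_of_injOn fun i hi j hj hij =>
      jump_injOn (mem_filter.1 hi).2 (mem_filter.1 hj).2 hij
  have h2 := card_filter_add_card_filter_not (s := (univ : Finset (Fin n)))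
    (p := IsJump f)
  have h3 : ((JVj f)ᶜ).card = Fintype.card (Fin n) - (JVj f).card := card_compl _
  have h4 : (univ : Finset (Fin n)).card = Fintype.card (Fin n) := card_univ
  have h5 : (JVj f).card ≤ Fintype.card (Fin n) := card_le_univ _
  unfold NJ
  omega

/-- number of non-jump positions strictly before `i` -/
def cnt (f : Fin n → Fin n) (i : Fin n) : ℕ := ((NJ f).filter (· < i)).card

lemma cnt_lt_of_mem {f : Fin n → Fin n} {i : Fin n} (hi : i ∈ NJ f) :
    cnt f i < (NJ f).card := by
  apply card_lt_card
  constructor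
  · exact filter_subset _ _
  · intro hsub
    have := hsub hi
    rw [mem_filter] at this
    exact absurd this.2 (lt_irrefl i)

lemma cnt_strictmono {f : Fin n → Fin n} {i i' : Fin n} (hi : i ∈ NJ f) (hii' : i < i') :
    cnt f i < cnt f i' := by
  apply card_lt_card
  constructor
  · intro x hx
    rw [mem_filter] at hx ⊢
    exact ⟨hx.1, lt_trans hx.2 hii'⟩
  · intro hsub
    have : i ∈ (NJ f).filter (· < i') := mem_filter.2 ⟨hi, hii'⟩
    have := hsub this
    rw [mem_filter] at this
    exact absurd this.2 (lt_irrefl i)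

/-- the permutation built from a monotone staircase `f` -/
def buildP (f : Fin n → Fin n) : Fin n → Fin n := fun i =>
  if _h : IsJump f i then f i
  else if hb : cnt f i < ((JVj f)ᶜ).card then ((JVj f)ᶜ).orderEmbOfFin rfl ⟨cnt f i, hb⟩
  else i

lemma buildP_jump {f : Fin n → Fin n} {i : Fin n} (h : IsJump f i) : buildP f i = f i := by
  rw [buildP, dif_pos h]

lemma buildP_nonjump {f : Fin n → Fin n} {i : Fin n} (h : ¬ IsJump f i) :
    buildP f i = ((JVj f)ᶜ).orderEmbOfFin rfl
      ⟨cnt f i, (card_NJ f) ▸ cnt_lt_of_mem (mem_filter.2 ⟨mem_univ i, h⟩)⟩ := by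
  rw [buildP, dif_neg h, dif_pos]

lemma buildP_nonjump_mem {f : Fin n → Fin n} {i : Fin n} (h : ¬ IsJump f i) :
    buildP f i ∈ (JVj f)ᶜ := by
  rw [buildP_nonjump h]
  exact orderEmbOfFin_mem _ _ _

lemma buildP_jump_mem {f : Fin n → Fin n} {i : Fin n} (h : IsJump f i) :
    buildP f i ∈ JVj f := by
  rw [buildP_jump h, JVj]
  exact mem_image.2 ⟨i, mem_filter.2 ⟨mem_univ i, h⟩, rfl⟩

lemma buildP_injective (f : Fin n → Fin n) : Function.Injective (buildP f) := by
  intro i j hij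
  by_cases hi : IsJump f i <;> by_cases hj : IsJump f j
  · rw [buildP_jump hi, buildP_jump hj] at hij
    exact jump_injOn hi hj hij
  · exact absurd (hij ▸ buildP_jump_mem hi) (by simpa using buildP_nonjump_mem hj)
  · exact absurd (hij.symm ▸ buildP_jump_mem hj) (by simpa using buildP_nonjump_mem hi)
  · rw [buildP_nonjump hi, buildP_nonjump hj] at hij
    have h1 := ((JVj f)ᶜ.orderEmbOfFin rfl).injective hij
    have h2 : cnt f i = cnt f j := Fin.mk_eq_mk.1 h1
    by_contra hne
    rcases lt_or_gt_of_ne hne with h | h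
    · exact absurd h2 (Nat.ne_of_lt (cnt_strictmono (mem_filter.2 ⟨mem_univ i, hi⟩) h))
    · exact absurd h2.symm (Nat.ne_of_lt (cnt_strictmono (mem_filter.2 ⟨mem_univ j, hj⟩) h))

lemma buildP_lt_nonjump {f : Fin n → Fin n} {i j : Fin n} (hi : ¬ IsJump f i)
    (hj : ¬ IsJump f j) (hij : i < j) : buildP f i < buildP f j := by
  rw [buildP_nonjump hi, buildP_nonjump hj]
  exact ((JVj f)ᶜ.orderEmbOfFin rfl).strictMono
    (Fin.mk_lt_mk.2 (cnt_strictmono (mem_filter.2 ⟨mem_univ i, hi⟩) hij))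

lemma orderEmbOfFin_le_of_card {α : Type*} [LinearOrder α] {s : Finset α} {m : ℕ}
    (h : s.card = m) (k : Fin m) (b : α) (hc : (k : ℕ) + 1 ≤ (s.filter (· ≤ b)).card) :
    s.orderEmbOfFin h k ≤ b := by
  by_contra hlt
  push_neg at hlt
  have hsub : s.filter (· ≤ b) ⊆ (univ.filter (fun r : Fin m => r < k)).image (s.orderEmbOfFin h) := by
    intro x hx
    rw [mem_filter] at hx
    have hxr : x ∈ Set.range (s.orderEmbOfFin h) := by
      rw [range_orderEmbOfFin]; exact hx.1
    obtain ⟨r, hr⟩ := hxr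
    have hrk : r < k := by
      by_contra hge
      push_neg at hge
      have := (s.orderEmbOfFin h).monotone hge
      rw [hr] at this
      exact absurd (lt_of_le_of_lt hx.2 hlt) (not_lt.2 this)
    exact mem_image.2 ⟨r, mem_filter.2 ⟨mem_univ r, hrk⟩, hr⟩
  have h1 := card_le_card hsub
  have h2 : (univ.filter (fun r : Fin m => r < k)).card = (k : ℕ) := by
    rw [show univ.filter (fun r : Fin m => r < k) = Iio k from by ext r; simp, Fin.card_Iio]
  have h3 := card_image_le (s := univ.filter (fun r : Fin m => r < k)) (f := s.orderEmbOfFin h)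
  omega

lemma buildP_le {f : Fin n → Fin n} (hf : f ∈ Mset n) (i : Fin n) :
    buildP f i ≤ f i := by
  obtain ⟨hmono', hd⟩ := mem_Mset.1 hf
  have hmono : Monotone f := fun a b hab => hmono' a b hab
  by_cases hi : IsJump f i
  · rw [buildP_jump hi]
  · rw [buildP_nonjump hi]
    apply orderEmbOfFin_le_of_card
    -- counting
    have hA : ((JVj f).filter (· ≤ f i)) = ((univ.filter (IsJump f)).filter (· ≤ i)).image f := by
      ext v
      constructor
      · intro hv
        rw [mem_filter] at hv
        obtain ⟨hv1, hv2⟩ := hv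
        rw [JVj, mem_image] at hv1
        obtain ⟨l, hl, rfl⟩ := hv1
        have hjl : IsJump f l := (mem_filter.1 hl).2
        refine mem_image.2 ⟨l, mem_filter.2 ⟨hl, ?_⟩, rfl⟩
        by_contra hgt
        push_neg at hgt
        exact absurd (hjl i hgt) (not_lt.2 hv2)
      · intro hv
        obtain ⟨l, hl, rfl⟩ := mem_image.1 hv
        have hl1 : l ∈ univ.filter (IsJump f) := (mem_filter.1 hl).1
        have hl2 : l ≤ i := (mem_filter.1 hl).2
        exact mem_filter.2 ⟨mem_image.2 ⟨l, hl1, rfl⟩, hmono hl2⟩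
    have hAcard : ((JVj f).filter (· ≤ f i)).card = ((univ.filter (IsJump f)).filter (· ≤ i)).card := by
      rw [hA]
      apply card_image_of_injOn
      intro a ha b hb hab
      simp only [mem_coe, mem_filter] at ha hb
      exact jump_injOn ha.1.2 hb.1.2 hab
    -- partition of Iic i
    have hsplit : ((univ.filter (IsJump f)).filter (· ≤ i)).card
        + ((NJ f).filter (· ≤ i)).card = (i : ℕ) + 1 := by
      have h1 : (univ.filter (IsJump f)).filter (· ≤ i) = (Iic i).filter (IsJump f) := by
        ext x; simp [mem_Iic, and_comm]
      have h2 : (NJ f).filter (· ≤ i) = (Iic i).filter (fun x => ¬ IsJump f x) := by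
        ext x; simp [NJ, mem_Iic, and_comm]
      rw [h1, h2, card_filter_add_card_filter_not, Fin.card_Iic]
    have hBcard : ((NJ f).filter (· ≤ i)).card = cnt f i + 1 := by
      have : (NJ f).filter (· ≤ i) = insert i ((NJ f).filter (· < i)) := by
        ext x
        rw [mem_insert, mem_filter, mem_filter]
        constructor
        · intro ⟨hx1, hx2⟩
          rcases eq_or_lt_of_le hx2 with h | h
          · exact Or.inl h
          · exact Or.inr ⟨hx1, h⟩
        · rintro (h | ⟨hx1, hx2⟩)
          · rw [h]; exact ⟨mem_filter.2 ⟨mem_univ i, hi⟩, le_rfl⟩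
          · exact ⟨hx1, le_of_lt hx2⟩
      rw [this, card_insert_of_notMem (by
        intro hmem
        exact absurd (mem_filter.1 hmem).2 (lt_irrefl i)), cnt]
    -- split Iic (f i) by JV membership
    have hsplit2 : ((JVj f).filter (· ≤ f i)).card + (((JVj f)ᶜ).filter (· ≤ f i)).card
        = (f i : ℕ) + 1 := by
      have h1 : (JVj f).filter (· ≤ f i) = (Iic (f i)).filter (· ∈ JVj f) := by
        ext x; simp [mem_Iic, and_comm]
      have h2 : ((JVj f)ᶜ).filter (· ≤ f i) = (Iic (f i)).filter (fun x => ¬ x ∈ JVj f) := by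
        ext x; simp [mem_Iic, and_comm]
      rw [h1, h2, card_filter_add_card_filter_not, Fin.card_Iic]
    have hdiag := hd i
    simp only [Fin.val_mk]
    omega

lemma rmaxF_buildP {f : Fin n → Fin n} (hf : f ∈ Mset n) : rmaxF (buildP f) = f := by
  obtain ⟨hmono', hd⟩ := mem_Mset.1 hf
  have hmono : Monotone f := fun a b hab => hmono' a b hab
  funext i
  apply le_antisymm
  · exact rmaxF_le _ fun j hj => le_trans (buildP_le hf j) (hmono hj)
  · obtain ⟨j, hji, hjump, hje⟩ := exists_jump_of_mono hmono i
    calc f i = buildP f j := by rw [buildP_jump hjump, hje]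
    _ ≤ rmaxF (buildP f) i := le_rmaxF _ hji

/-- `buildP f` has no 321 pattern. -/
lemma buildP_avoids {f : Fin n → Fin n} (hf : f ∈ Mset n) (i j k : Fin n)
    (hij : i < j) (hjk : j < k) (h1 : buildP f k < buildP f j) (h2 : buildP f j < buildP f i) :
    False := by
  obtain ⟨hmono', hd⟩ := mem_Mset.1 hf
  have hmono : Monotone f := fun a b hab => hmono' a b hab
  have hnj : ¬ IsJump f j := by
    intro hj
    have : buildP f i ≤ buildP f j := by
      rw [buildP_jump hj]
      exact le_trans (buildP_le hf i) (hmono (le_of_lt hij))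
    exact absurd h2 (not_lt.2 this)
  have hnk : ¬ IsJump f k := by
    intro hk
    have : buildP f j ≤ buildP f k := by
      rw [buildP_jump hk]
      exact le_trans (buildP_le hf j) (hmono (le_of_lt hjk))
    exact absurd h1 (not_lt.2 this)
  exact absurd h1 (not_lt.2 (le_of_lt (buildP_lt_nonjump hnj hnk hjk)))

lemma jump_eq_rmaxF {p : Fin n → Fin n} {i : Fin n} (h : IsJump p i) : p i = rmaxF p i := by
  obtain ⟨j, hji, hje⟩ := rmaxF_attained p i
  rcases eq_or_lt_of_le hji with rfl | hlt
  · exact hje.symm ▸ rfl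
  · exfalso
    have h1 : p j < p i := h j hlt
    have h2 : p i ≤ rmaxF p i := le_rmaxF p le_rfl
    rw [hje] at h1
    exact absurd h2 (not_le.2 h1)

lemma nonjump_lt_rmaxF {p : Fin n → Fin n} (hinj : Function.Injective p) {i : Fin n}
    (h : ¬ IsJump p i) : ∃ j < i, p i < p j := by
  rw [IsJump] at h
  push_neg at h
  obtain ⟨j, hji, hle⟩ := h
  exact ⟨j, hji, lt_of_le_of_ne hle (fun hc => absurd (hinj hc) (by intro he; rw [he] at hji; exact absurd hji (lt_irrefl _)))⟩

lemma jump_iff_rmaxF {p : Fin n → Fin n} (hinj : Function.Injective p) (i : Fin n) :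
    IsJump p i ↔ IsJump (rmaxF p) i := by
  constructor
  · intro h j hj
    have h1 : rmaxF p j ≤ rmaxF p i := rmaxF_mono p (le_of_lt hj)
    obtain ⟨l, hl, hle⟩ := rmaxF_attained p j
    have h2 : p l < p i := h l (lt_of_le_of_lt hl hj)
    rw [hle, jump_eq_rmaxF h] at h2
    exact h2
  · intro h
    have hpe : p i = rmaxF p i := by
      obtain ⟨l, hl, hle⟩ := rmaxF_attained p i
      rcases eq_or_lt_of_le hl with rfl | hlt
      · exact hle.symm ▸ rfl
      · exfalso
        have h1 : rmaxF p l < rmaxF p i := h l hlt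
        have h2 : p l ≤ rmaxF p l := le_rmaxF p le_rfl
        rw [hle] at h2
        exact absurd h1 (not_lt.2 h2)
    intro j hj
    calc p j ≤ rmaxF p j := le_rmaxF p le_rfl
    _ < rmaxF p i := h j hj
    _ = p i := hpe.symm

lemma JVj_eq_image_rmaxF (p : Fin n → Fin n) : JVj p = univ.image (rmaxF p) := by
  ext v
  rw [JVj, mem_image, mem_image]
  constructor
  · rintro ⟨j, hj, rfl⟩
    exact ⟨j, mem_univ j, (jump_eq_rmaxF (mem_filter.1 hj).2).symm⟩
  · rintro ⟨i, -, rfl⟩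
    obtain ⟨j, hji, hjump, hje⟩ := rmaxF_attained_at_jump p i
    exact ⟨j, mem_filter.2 ⟨mem_univ j, hjump⟩, hje⟩



variable {n : ℕ}

lemma avoid_nonjump_strict {π : Equiv.Perm (Fin n)} (hA : Avoids321 π) {i i' : Fin n}
    (hi : ¬ IsJump ⇑π i) (hii' : i < i') : π i < π i' := by
  obtain ⟨j, hji, hlt⟩ := nonjump_lt_rmaxF π.injective hi
  by_contra hle
  push_neg at hle
  have h2 : π i' < π i := lt_of_le_of_ne hle (fun hc => absurd (π.injective hc) (ne_of_gt hii'))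
  exact hA ⟨j, i, i', hji, hii', h2, hlt⟩

lemma nonjump_val_not_mem {p : Fin n → Fin n} (hinj : Function.Injective p) {i : Fin n}
    (hi : ¬ IsJump p i) : p i ∉ JVj p := by
  intro hmem
  rw [JVj, mem_image] at hmem
  obtain ⟨l, hl, hle⟩ := hmem
  have := hinj hle
  rw [this] at hl
  exact hi (mem_filter.1 hl).2

lemma rmaxF_injective {π σ : Equiv.Perm (Fin n)} (hπ : Avoids321 π) (hσ : Avoids321 σ)
    (h : rmaxF ⇑π = rmaxF ⇑σ) : π = σ := by
  have hjump : ∀ i, IsJump ⇑π i ↔ IsJump ⇑σ i := by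
    intro i
    rw [jump_iff_rmaxF π.injective, jump_iff_rmaxF σ.injective, h]
  have hNJ : NJ ⇑σ = NJ ⇑π := by
    unfold NJ; ext i; simp [hjump i]
  have hJV : JVj ⇑σ = JVj ⇑π := by
    rw [JVj_eq_image_rmaxF, JVj_eq_image_rmaxF, h]
  have hjv : ∀ i, IsJump ⇑π i → π i = σ i := by
    intro i hji
    rw [jump_eq_rmaxF hji, h, ← jump_eq_rmaxF ((hjump i).1 hji)]
  -- non-jump positions
  set N := NJ ⇑π with hN
  have hcard : ((JVj ⇑π)ᶜ).card = N.card := (card_NJ ⇑π).symm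
  set e := N.orderEmbOfFin rfl with he
  have hrange : ∀ i ∈ N, ∃ r, e r = i := by
    intro i hi
    have : i ∈ Set.range e := by rw [he, range_orderEmbOfFin]; exact hi
    exact this
  have hmemN : ∀ r, e r ∈ N := fun r => orderEmbOfFin_mem _ _ _
  have huniq : ∀ (τ : Equiv.Perm (Fin n)), Avoids321 τ → (∀ i, ¬ IsJump ⇑τ i ↔ i ∈ N) →
      JVj ⇑τ = JVj ⇑π → (fun r => τ (e r)) = ((JVj ⇑π)ᶜ).orderEmbOfFin hcard := by
    intro τ hτA hτN hτJ
    apply orderEmbOfFin_unique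
    · intro r
      rw [mem_compl, ← hτJ]
      exact nonjump_val_not_mem τ.injective ((hτN (e r)).2 (hmemN r))
    · intro r r' hrr'
      exact avoid_nonjump_strict hτA ((hτN (e r)).2 (hmemN r)) (e.strictMono hrr')
  have h1 := huniq π hπ (fun i => by rw [hN, NJ]; simp) rfl
  have h2 := huniq σ hσ (fun i => by rw [hN, NJ]; simp [hjump i]) hJV
  apply Equiv.ext
  intro i
  by_cases hji : IsJump ⇑π i
  · exact hjv i hji
  · obtain ⟨r, rfl⟩ := hrange i (mem_filter.2 ⟨mem_univ _, hji⟩)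
    calc π (e r) = ((JVj ⇑π)ᶜ).orderEmbOfFin hcard r := congrFun h1 r
    _ = σ (e r) := (congrFun h2 r).symm

theorem card_avoids321_eq_catalan (n : ℕ) :
    (Finset.univ.filter fun π : Equiv.Perm (Fin n) => Avoids321 π).card =
      (2 * n).choose n / (n + 1) := by
  open Finset in
  have h1 : (univ.filter fun π : Equiv.Perm (Fin n) => Avoids321 π).card = (Mset n).card := by
    apply card_bij (i := fun (π : Equiv.Perm (Fin n)) _ => rmaxF ⇑π)
    · intro π _
      rw [mem_Mset]
      exact ⟨fun i j hij => rmaxF_mono _ hij, fun i => rmaxF_diag _ π.injective i⟩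
    · intro π hπ σ hσ hps
      exact rmaxF_injective (mem_filter.1 hπ).2 (mem_filter.1 hσ).2 hps
    · intro f hf
      have hbij : Function.Bijective (buildP f) :=
        (Finite.injective_iff_bijective).1 (buildP_injective f)
      refine ⟨Equiv.ofBijective (buildP f) hbij, ?_, ?_⟩
      · rw [mem_filter]
        refine ⟨mem_univ _, ?_⟩
        rintro ⟨i, j, k, hij, hjk, h1, h2⟩
        exact buildP_avoids hf i j k hij hjk h1 h2
      · have hco : ⇑(Equiv.ofBijective (buildP f) hbij) = buildP f := rfl
        rw [hco, rmaxF_buildP hf]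
  rw [h1, card_Mset n, catalan_eq_centralBinom_div]
  rfl
end

section
/- A permutation avoids the generalized pattern 2-31 if and only if it avoids the classical pattern 2-3-1; that is, for π in S_n, there exist indices i < j < j+1 with π(j+1) < π(i) < π(j) if and only if there exist indices i < j < k with π(k) < π(i) < π(j). -/
/-! Given a 2-3-1 occurrence `i < j < k`, walk from `j` to `k`: the values start above `π i` and
end below it, so some adjacent step `j' → j' + 1` crosses `π i`, and injectivity rules out
landing on `π i` itself. -/

theorem Nat.exists_le_lt_and_not_succ {p : ℕ → Prop} {a b : ℕ} (hab : a ≤ b) (ha : p a)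
    (hb : ¬p b) : ∃ m, a ≤ m ∧ m < b ∧ p m ∧ ¬p (m + 1) := by
  induction b, hab using Nat.le_induction with
  | base => exact absurd ha hb
  | succ b hab ih =>
    by_cases hpb : p b
    · exact ⟨b, hab, b.lt_add_one, hpb, hb⟩
    · obtain ⟨m, ham, hmb, hm, hm1⟩ := ih hpb
      exact ⟨m, ham, hmb.trans b.lt_add_one, hm, hm1⟩

theorem exists_pattern_2_31_of_pattern_2_3_1 {α : Type*} [LinearOrder α] {n : ℕ} {f : Fin n → α}
    (hf : Function.Injective f) {i j k : Fin n} (hij : i < j) (hjk : j < k) (hki : f k < f i)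
    (hij' : f i < f j) :
    ∃ j' k' : Fin n, i < j' ∧ (k' : ℕ) = j' + 1 ∧ f k' < f i ∧ f i < f j' := by
  obtain ⟨m, hjm, -, hm, hm1⟩ :=
    Nat.exists_le_lt_and_not_succ (p := fun m => ∀ h : m < n, f i < f ⟨m, h⟩)
      (le_of_lt hjk) (fun _ => hij') (fun h => lt_asymm hki (h k.isLt))
  obtain ⟨hm1n, hm1⟩ := not_forall.mp hm1
  have him : (i : ℕ) < m := (Fin.lt_def.mp hij).trans_le hjm
  have hmn : m < n := Nat.lt_of_succ_lt hm1n
  have hstep : f ⟨m + 1, hm1n⟩ ≠ f i := fun h => by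
    have : m + 1 = (i : ℕ) := congrArg Fin.val (hf h)
    omega
  exact ⟨⟨m, hmn⟩, ⟨m + 1, hm1n⟩, him, rfl,
    lt_of_le_of_ne (not_lt.mp hm1) hstep, hm hmn⟩

theorem pattern_2_31_iff_2_3_1 (n : ℕ) (π : Equiv.Perm (Fin n)) :
    (∃ i j k : Fin n, i < j ∧ (k : ℕ) = (j : ℕ) + 1 ∧ π k < π i ∧ π i < π j) ↔
      (∃ i j k : Fin n, i < j ∧ j < k ∧ π k < π i ∧ π i < π j) := by
  constructor
  · rintro ⟨i, j, k, hij, hk, hki, hij'⟩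
    exact ⟨i, j, k, hij, by rw [Fin.lt_def]; omega, hki, hij'⟩
  · rintro ⟨i, j, k, hij, hjk, hki, hij'⟩
    exact ⟨i, exists_pattern_2_31_of_pattern_2_3_1 π.injective hij hjk hki hij'⟩
end
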